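/- arXiv:2401.02185 — 6 statements merged into one kernel-verified Lean document; each statement's English description precedes it below -/
import Mathlib

section
/- Let α be an injective orientation-preserving partial transformation of the chain Ω_n = {1,...,n} with image contained in a nonempty subset Y ⊆ Ω_n. Then α is a regular element of the semigroup POPI_n(Y) if and only if Im(α) = Yα (the image of Y under α). -/
/-!
The partial inverse `α⁻¹` is the natural candidate for an inverse of `α` in `POPI_n(Y)`. It is
injective, and orientation-preserving: if the image sequence of `α` is `a ++ b` with `b ++ a`
increasing, then reading `α⁻¹` along the increasing enumeration of `Im α` gives `bα⁻¹ ++ aα⁻¹`,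
a rotation of the increasing enumeration of `Dom α`. Its image is `Dom α`, so `α⁻¹ ∈ POPI_n(Y)`
iff `Dom α ⊆ Y`, which for injective `α` is `Im α = Yα`. Conversely, if `αβα = α` with
`Im β ⊆ Y`, injectivity of `α` gives `x = xαβ ∈ Y` for every `x ∈ Dom α`.
-/

open scoped Classical

namespace POPIpaper

/-- Partial transformations of `Ω_n = {1,…,n}`, modelled on `Fin n`. -/
abbrev PT (n : ℕ) := Fin n → Option (Fin n)

/-- Composition of partial transformations (apply `α` first, then `β`). -/
def comp {n : ℕ} (α β : PT n) : PT n := fun x => (α x).bind β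

/-- Domain of a partial transformation. -/
noncomputable def dom {n : ℕ} (α : PT n) : Finset (Fin n) :=
  Finset.univ.filter (fun x => (α x).isSome)

/-- Image of a partial transformation. -/
noncomputable def im {n : ℕ} (α : PT n) : Finset (Fin n) :=
  Finset.univ.filter (fun y => ∃ x, α x = some y)

/-- rank(α) = |Im(α)|. -/
noncomputable def rank {n : ℕ} (α : PT n) : ℕ := (im α).card

/-- Injectivity of a partial transformation. -/
def Inj {n : ℕ} (α : PT n) : Prop :=
  ∀ x y z : Fin n, α x = some z → α y = some z → x = y

/-- Orientation-preserving: the sequence of images, taken along the increasing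
enumeration of the domain, is cyclic, i.e. some rotation of it is sorted. -/
def OP {n : ℕ} (α : PT n) : Prop :=
  ∃ k : ℕ, (((List.finRange n).filterMap α).rotate k).Pairwise (· ≤ ·)

/-- The semigroup `POPI_n(Y)` as a set of partial transformations:
injective, orientation-preserving, with image contained in `Y`. -/
def POPI (n : ℕ) (Y : Finset (Fin n)) : Set (PT n) :=
  {α | Inj α ∧ OP α ∧ ∀ x y : Fin n, α x = some y → y ∈ Y}

/-- Regularity of `α` as an element of the subsemigroup `S`. -/
def IsRegularIn {n : ℕ} (S : Set (PT n)) (α : PT n) : Prop :=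
  ∃ β ∈ S, comp (comp α β) α = α

/-- The partial identity on a subset `A`. -/
def idp {n : ℕ} (A : Finset (Fin n)) : PT n :=
  fun x => if x ∈ A then some x else none

/-- Fixed points of a partial transformation. -/
noncomputable def fix {n : ℕ} (α : PT n) : Finset (Fin n) :=
  Finset.univ.filter (fun x => α x = some x)

/-- Green's relation ℒ on the set `S`: `S¹α = S¹β`. -/
def LRel {n : ℕ} (S : Set (PT n)) (α β : PT n) : Prop :=
  (α = β ∨ ∃ γ ∈ S, comp γ β = α) ∧ (β = α ∨ ∃ γ ∈ S, comp γ α = β)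

/-- Green's relation ℛ on the set `S`: `αS¹ = βS¹`. -/
def RRel {n : ℕ} (S : Set (PT n)) (α β : PT n) : Prop :=
  (α = β ∨ ∃ γ ∈ S, comp β γ = α) ∧ (β = α ∨ ∃ γ ∈ S, comp α γ = β)

/-- Green's relation ℋ = ℒ ∩ ℛ. -/
def HRel {n : ℕ} (S : Set (PT n)) (α β : PT n) : Prop :=
  LRel S α β ∧ RRel S α β

/-- Green's relation 𝒟 = ℒ ∘ ℛ. -/
def DRel {n : ℕ} (S : Set (PT n)) (α β : PT n) : Prop :=
  ∃ γ ∈ S, LRel S α γ ∧ RRel S γ β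

/-- `Φ` is a semigroup isomorphism from the subsemigroup `S` onto `T`. -/
def IsIso {n : ℕ} (S T : Set (PT n)) (Φ : PT n → PT n) : Prop :=
  Set.BijOn Φ S T ∧ ∀ a ∈ S, ∀ b ∈ S, Φ (comp a b) = comp (Φ a) (Φ b)

/-- The product `β * l₁ * ⋯ * l_k` of a nonempty list of partial transformations. -/
def prodList {n : ℕ} (β : PT n) (l : List (PT n)) : PT n := l.foldl comp β

section PartialInverse

variable {n : ℕ}

noncomputable def pinv (α : PT n) : PT n :=
  fun z => if h : ∃ x, α x = some z then some h.choose else none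

theorem apply_eq_of_pinv_eq_some {α : PT n} {x z : Fin n} (h : pinv α z = some x) :
    α x = some z := by
  by_cases hz : ∃ x, α x = some z
  · rw [pinv, dif_pos hz, Option.some_inj] at h
    exact h ▸ hz.choose_spec
  · simp [pinv, dif_neg hz] at h

theorem pinv_eq_some_iff {α : PT n} (hα : Inj α) {x z : Fin n} :
    pinv α z = some x ↔ α x = some z := by
  refine ⟨apply_eq_of_pinv_eq_some, fun hx => ?_⟩
  have hz : ∃ x, α x = some z := ⟨x, hx⟩
  rw [pinv, dif_pos hz, hα _ _ _ hz.choose_spec hx]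

theorem inj_pinv (α : PT n) : Inj (pinv α) := fun _ _ _ hz hz' =>
  Option.some_inj.mp ((apply_eq_of_pinv_eq_some hz).symm.trans (apply_eq_of_pinv_eq_some hz'))

theorem comp_comp_pinv_self (α : PT n) : comp (comp α (pinv α)) α = α := by
  funext x
  cases hx : α x with
  | none => simp [comp, hx]
  | some z =>
    have hz : ∃ x, α x = some z := ⟨x, hx⟩
    simp [comp, hx, pinv, dif_pos hz, hz.choose_spec]

theorem comp_eq_idp_dom_of_inverse {α β : PT n} (hab : ∀ x z, α x = some z ↔ β z = some x) :
    comp α β = idp (dom α) := by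
  funext x
  cases hx : α x with
  | none => simp [comp, idp, dom, hx]
  | some z => simp [comp, idp, dom, hx, (hab x z).mp hx]

theorem filterMap_idp (A : Finset (Fin n)) (l : List (Fin n)) :
    l.filterMap (idp A) = l.filter (· ∈ A) := by
  rw [← List.filterMap_eq_filter]
  congr 1
  funext x
  simp [idp, Option.guard]

theorem OP.of_inverse {α β : PT n} (hab : ∀ x z, α x = some z ↔ β z = some x) (hα : OP α) :
    OP β := by
  obtain ⟨k, hk⟩ := hα
  set L := (List.finRange n).filterMap α
  have hnodup : L.Nodup := (List.nodup_finRange n).filterMap fun x x' z hx hx' =>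
    Option.some_inj.mp (((hab x z).mp hx).symm.trans ((hab x' z).mp hx'))
  have hβL : L.filterMap β = (List.finRange n).filter (· ∈ dom α) := by
    rw [List.filterMap_filterMap, ← filterMap_idp, ← comp_eq_idp_dom_of_inverse hab]
    rfl
  have himβ : (List.finRange n).filter (fun z => (β z).isSome) = L.rotate k := by
    refine ((List.pairwise_lt_finRange n).filter _).eq_of_mem_iff
      (hk.sortedLE.sortedLT_of_nodup (List.nodup_rotate.mpr hnodup)).pairwise fun z => ?_
    simp [L, List.mem_rotate, Option.isSome_iff_exists, hab]
  have hβ : (List.finRange n).filterMap β =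
      ((List.finRange n).filter fun z => (β z).isSome).filterMap β := by
    rw [List.filterMap_filter]
    congr 1
    funext z
    cases β z <;> rfl
  rw [List.rotate_eq_drop_append_take_mod] at himβ
  refine ⟨((L.drop (k % L.length)).filterMap β).length, ?_⟩
  rw [hβ, himβ, List.filterMap_append, List.rotate_append_length_eq,
    ← List.filterMap_append, List.take_append_drop, hβL]
  exact (List.pairwise_lt_finRange n).filter _ |>.imp le_of_lt

theorem im_eq_image_iff_dom_subset {α : PT n} (hα : Inj α) (Y : Finset (Fin n)) :
    im α = Finset.univ.filter (fun z => ∃ x ∈ Y, α x = some z) ↔ dom α ⊆ Y := by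
  constructor
  · intro h x hx
    obtain ⟨z, hz⟩ := Option.isSome_iff_exists.mp (Finset.mem_filter.mp hx).2
    have hzY : z ∈ Finset.univ.filter (fun z => ∃ x ∈ Y, α x = some z) :=
      h ▸ Finset.mem_filter.mpr ⟨Finset.mem_univ z, x, hz⟩
    obtain ⟨x', hx'Y, hx'⟩ := (Finset.mem_filter.mp hzY).2
    rwa [hα x x' z hz hx']
  · intro h
    ext z
    simp only [im, Finset.mem_filter, Finset.mem_univ, true_and]
    exact ⟨fun ⟨x, hx⟩ => ⟨x, h (by simp [dom, hx]), hx⟩, fun ⟨x, _, hx⟩ => ⟨x, hx⟩⟩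

theorem dom_subset_of_comp_comp_eq_self {α β : PT n} {Y : Finset (Fin n)} (hα : Inj α)
    (hβ : ∀ z x, β z = some x → x ∈ Y) (h : comp (comp α β) α = α) : dom α ⊆ Y := by
  intro x hx
  obtain ⟨z, hz⟩ := Option.isSome_iff_exists.mp (Finset.mem_filter.mp hx).2
  have hαβα := congrFun h x
  simp only [comp, hz, Option.bind_some] at hαβα
  obtain ⟨w, hw, hwz⟩ := Option.bind_eq_some_iff.mp hαβα
  rw [hα x w z hz hwz]
  exact hβ z w hw

theorem pinv_mem_POPI {α : PT n} {Y : Finset (Fin n)} (hinj : Inj α) (hop : OP α)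
    (hdom : dom α ⊆ Y) : pinv α ∈ POPI n Y :=
  ⟨inj_pinv α, hop.of_inverse fun _ _ => (pinv_eq_some_iff hinj).symm,
    fun _ x h => hdom (by simp [dom, apply_eq_of_pinv_eq_some h])⟩

end PartialInverse

theorem regular_iff_im_eq_Yalpha_general {n : ℕ} (Y : Finset (Fin n))
    (α : PT n) (hα : α ∈ POPI n Y) :
    IsRegularIn (POPI n Y) α ↔
      im α = Finset.univ.filter (fun z => ∃ x ∈ Y, α x = some z) := by
  obtain ⟨hinj, hop, -⟩ := hα
  rw [im_eq_image_iff_dom_subset hinj]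
  constructor
  · rintro ⟨β, ⟨-, -, hβY⟩, hαβα⟩
    exact dom_subset_of_comp_comp_eq_self hinj hβY hαβα
  · exact fun hdom => ⟨pinv α, pinv_mem_POPI hinj hop hdom, comp_comp_pinv_self α⟩

/-- `α ∈ POPI_n(Y)` is regular iff `Im(α) = Yα`. -/
theorem regular_iff_im_eq_Yalpha {n : ℕ} (Y : Finset (Fin n)) (hY : Y.Nonempty)
    (α : PT n) (hα : α ∈ POPI n Y) :
    IsRegularIn (POPI n Y) α ↔
      im α = Finset.univ.filter (fun z => ∃ x ∈ Y, α x = some z) :=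
  regular_iff_im_eq_Yalpha_general Y α hα

end POPIpaper
end

section
/- Let α, β ∈ POPI_n(Y). Then (α, β) ∈ ℒ (Green's L-relation on POPI_n(Y)) if and only if either both α and β are regular elements of POPI_n(Y) and Im(α) = Im(β), or α = β. -/
open scoped Classical

namespace List

variable {α : Type*}

def CyclicallySorted [Preorder α] (l : List α) : Prop :=
  ∃ l', l ~r l' ∧ l'.Pairwise (· ≤ ·)

theorem IsRotated.filterMap {β : Type*} {l l' : List α} (h : l ~r l') (f : α → Option β) :
    l.filterMap f ~r l'.filterMap f := by
  obtain ⟨k, rfl⟩ := h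
  conv_lhs => rw [← take_append_drop (k % l.length) l]
  rw [rotate_eq_drop_append_take_mod, filterMap_append, filterMap_append]
  exact isRotated_append

namespace CyclicallySorted

variable [Preorder α] {l l' s : List α}

theorem of_isRotated (h : l.CyclicallySorted) (hr : l ~r l') : l'.CyclicallySorted :=
  let ⟨m, hm, hsorted⟩ := h
  ⟨m, hr.symm.trans hm, hsorted⟩

theorem sublist (h : l.CyclicallySorted) (hs : s <+ l) : s.CyclicallySorted := by
  obtain ⟨_, ⟨k, rfl⟩, hsorted⟩ := h
  rw [rotate_eq_drop_append_take_mod] at hsorted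
  rw [← take_append_drop (k % l.length) l] at hs
  obtain ⟨s₁, s₂, rfl, h₁, h₂⟩ := sublist_append_iff.mp hs
  exact ⟨s₂ ++ s₁, isRotated_append, hsorted.sublist (h₂.append h₁)⟩

end CyclicallySorted

theorem Pairwise.sublist_finRange {n : ℕ} {l : List (Fin n)} (h : l.Pairwise (· < ·)) :
    l <+ finRange n :=
  sublist_of_subperm_of_pairwise (subperm_of_subset h.nodup fun x _ => mem_finRange x) h
    (pairwise_lt_finRange n)

theorem CyclicallySorted.filterMap {n : ℕ} {β : Type*} [Preorder β] {l : List (Fin n)}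
    {f : Fin n → Option β} (hl : l.CyclicallySorted) (hnd : l.Nodup)
    (hf : ((finRange n).filterMap f).CyclicallySorted) : (l.filterMap f).CyclicallySorted := by
  obtain ⟨s, hls, hs⟩ := hl
  have hlt : s.Pairwise (· < ·) :=
    (hs.and (hls.nodup_iff.mp hnd)).imp fun h => lt_of_le_of_ne h.1 h.2
  exact ((hf.sublist (hlt.sublist_finRange.filterMap f))).of_isRotated (hls.filterMap f).symm

end List

namespace POPIpaper

variable {n : ℕ}

theorem comp_assoc (α β γ : PT n) : comp (comp α β) γ = comp α (comp β γ) :=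
  funext fun x => Option.bind_assoc (α x) β γ

theorem mem_dom {α : PT n} {x : Fin n} : x ∈ dom α ↔ ∃ y, α x = some y := by
  simp [dom, Option.isSome_iff_exists]

theorem mem_im {α : PT n} {y : Fin n} : y ∈ im α ↔ ∃ x, α x = some y := by
  simp [im]

theorem im_comp_subset (α β : PT n) : im (comp α β) ⊆ im β := by
  intro z hz
  obtain ⟨x, hx⟩ := mem_im.mp hz
  obtain ⟨y, -, hy⟩ := Option.bind_eq_some_iff.mp hx
  exact mem_im.mpr ⟨y, hy⟩

theorem im_subset_of_mem_POPI {Y : Finset (Fin n)} {α : PT n} (hα : α ∈ POPI n Y) : im α ⊆ Y :=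
  fun y hy => let ⟨x, hx⟩ := mem_im.mp hy; hα.2.2 x y hx

theorem op_iff {α : PT n} : OP α ↔ ((List.finRange n).filterMap α).CyclicallySorted :=
  ⟨fun ⟨k, h⟩ => ⟨_, ⟨k, rfl⟩, h⟩, fun ⟨_, ⟨k, hk⟩, h⟩ => ⟨k, hk ▸ h⟩⟩

theorem inj_comp {α β : PT n} (hα : Inj α) (hβ : Inj β) : Inj (comp α β) := by
  intro x y z hx hy
  obtain ⟨u, hu, hu'⟩ := Option.bind_eq_some_iff.mp hx
  obtain ⟨v, hv, hv'⟩ := Option.bind_eq_some_iff.mp hy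
  obtain rfl := hβ u v z hu' hv'
  exact hα x y u hu hv

theorem Inj.nodup_filterMap {α : PT n} (hα : Inj α) : ((List.finRange n).filterMap α).Nodup :=
  (List.nodup_finRange n).filterMap fun x y z hx hy => hα x y z hx hy

theorem op_comp {α β : PT n} (hα : Inj α) (hαop : OP α) (hβop : OP β) : OP (comp α β) := by
  rw [op_iff] at *
  have h : (List.finRange n).filterMap (comp α β) = ((List.finRange n).filterMap α).filterMap β :=
    List.filterMap_filterMap.symm
  rw [h]
  exact hαop.filterMap hα.nodup_filterMap hβop

theorem comp_mem_POPI {Y : Finset (Fin n)} {α β : PT n} (hα : α ∈ POPI n Y) (hβ : β ∈ POPI n Y) :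
    comp α β ∈ POPI n Y :=
  ⟨inj_comp hα.1 hβ.1, op_comp hα.1 hα.2.1 hβ.2.1,
    fun _ z h => let ⟨_, _, hy⟩ := Option.bind_eq_some_iff.mp h; hβ.2.2 _ z hy⟩

/-- For non-injective `α` this picks an arbitrary preimage. -/
noncomputable def inv (α : PT n) : PT n :=
  fun y => if h : ∃ x, α x = some y then some h.choose else none

theorem inv_eq_some {α : PT n} {x y : Fin n} (h : inv α y = some x) : α x = some y := by
  unfold inv at h
  split at h
  · rename_i hex
    exact Option.some_inj.mp h ▸ hex.choose_spec
  · exact absurd h (by simp)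

theorem Inj.inv_eq_some_iff {α : PT n} (hα : Inj α) {x y : Fin n} :
    inv α y = some x ↔ α x = some y := by
  refine ⟨inv_eq_some, fun h => ?_⟩
  have hex : ∃ z, α z = some y := ⟨x, h⟩
  rw [inv, dif_pos hex, hα _ _ _ hex.choose_spec h]

theorem inj_inv (α : PT n) : Inj (inv α) := fun _ _ _ hx hy =>
  Option.some_inj.mp ((inv_eq_some hx).symm.trans (inv_eq_some hy))

theorem comp_inv_comp {α β : PT n} (hβ : Inj β) (him : im α ⊆ im β) :
    comp (comp α (inv β)) β = α := by
  rw [comp_assoc]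
  funext x
  cases hx : α x with
  | none => simp [comp, hx]
  | some z =>
    obtain ⟨w, hw⟩ := mem_im.mp (him (mem_im.mpr ⟨x, hx⟩))
    simp [comp, hx, hβ.inv_eq_some_iff.mpr hw, hw]

theorem dom_subset_im_of_comp_eq_self {α σ : PT n} (hα : Inj α) (h : comp σ α = α) :
    dom α ⊆ im σ := by
  intro x hx
  obtain ⟨y, hy⟩ := mem_dom.mp hx
  obtain ⟨u, hu, hu'⟩ := Option.bind_eq_some_iff.mp ((congrFun h x).trans hy)
  exact mem_im.mpr ⟨x, hα u x y hu' hy ▸ hu⟩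

def graph (α : PT n) : List (Fin n × Fin n) :=
  (List.finRange n).filterMap fun x => (α x).map (x, ·)

theorem mem_graph {α : PT n} {p : Fin n × Fin n} : p ∈ graph α ↔ α p.1 = some p.2 := by
  obtain ⟨x, y⟩ := p
  simp only [graph, List.mem_filterMap, List.mem_finRange, true_and, Option.map_eq_some_iff,
    Prod.mk.injEq]
  exact ⟨fun ⟨_, _, h, rfl, rfl⟩ => h, fun h => ⟨x, y, h, rfl, rfl⟩⟩

theorem graph_map_snd (α : PT n) : (graph α).map Prod.snd = (List.finRange n).filterMap α := by
  rw [graph, List.map_filterMap]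
  congr 1
  funext x
  cases α x <;> rfl

theorem pairwise_graph (α : PT n) : (graph α).Pairwise fun p q => p.1 < q.1 := by
  refine List.pairwise_filterMap.mpr ((List.pairwise_lt_finRange n).imp fun hlt => ?_)
  simp only [Option.map_eq_some_iff]
  rintro _ ⟨_, -, rfl⟩ _ ⟨_, -, rfl⟩
  exact hlt

theorem graph_eq_of_pairwise {α : PT n} {L : List (Fin n × Fin n)}
    (hL : L.Pairwise fun p q => p.1 < q.1) (hmem : ∀ p, p ∈ L ↔ α p.1 = some p.2) :
    graph α = L := by
  have nodup_of_pairwise {M : List (Fin n × Fin n)} (hM : M.Pairwise fun p q => p.1 < q.1) :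
      M.Nodup := hM.imp fun h heq => (heq ▸ h).false
  refine List.Perm.eq_of_pairwise (fun _ _ _ _ h₁ h₂ => absurd h₂ (lt_asymm h₁)) (pairwise_graph α)
    hL ?_
  refine (List.perm_ext_iff_of_nodup (nodup_of_pairwise (pairwise_graph α))
    (nodup_of_pairwise hL)).mpr fun p => ?_
  rw [mem_graph, hmem]

theorem graph_inv {α : PT n} (hα : Inj α) {k : ℕ}
    (hk : (((graph α).rotate k).map Prod.snd).Pairwise (· < ·)) :
    graph (inv α) = ((graph α).rotate k).map Prod.swap := by
  refine graph_eq_of_pairwise (List.pairwise_map.mpr (List.pairwise_map.mp hk)) ?_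
  rintro ⟨y, x⟩
  rw [List.mem_map_swap, List.mem_rotate, mem_graph, hα.inv_eq_some_iff]

theorem op_inv {α : PT n} (hα : Inj α) (hop : OP α) : OP (inv α) := by
  obtain ⟨k, hk⟩ := hop
  have hsnd : ((graph α).rotate k).map Prod.snd = ((List.finRange n).filterMap α).rotate k := by
    rw [List.map_rotate, graph_map_snd]
  have hlt : (((graph α).rotate k).map Prod.snd).Pairwise (· < ·) := by
    rw [hsnd]
    exact (hk.and (List.nodup_rotate.mpr hα.nodup_filterMap)).imp fun h => lt_of_le_of_ne h.1 h.2
  have hinv : (List.finRange n).filterMap (inv α) = ((graph α).map Prod.fst).rotate k := by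
    rw [← graph_map_snd, graph_inv hα hlt, List.map_map, ← List.map_rotate]
    rfl
  rw [op_iff, hinv]
  exact ⟨(graph α).map Prod.fst, List.IsRotated.forall _ k,
    List.pairwise_map.mpr ((pairwise_graph α).imp le_of_lt)⟩

section POPI

variable {Y : Finset (Fin n)} {α β γ δ : PT n}

theorem inv_mem_POPI (hα : α ∈ POPI n Y) (hdom : dom α ⊆ Y) : inv α ∈ POPI n Y :=
  ⟨inj_inv α, op_inv hα.1 hα.2.1, fun x _ h => hdom (mem_dom.mpr ⟨x, inv_eq_some h⟩)⟩

theorem isRegularIn_POPI_iff (hα : α ∈ POPI n Y) : IsRegularIn (POPI n Y) α ↔ dom α ⊆ Y :=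
  ⟨fun ⟨β, hβ, h⟩ => (dom_subset_im_of_comp_eq_self hα.1 h).trans
      ((im_comp_subset α β).trans (im_subset_of_mem_POPI hβ)),
    fun hdom => ⟨inv α, inv_mem_POPI hα hdom, comp_inv_comp hα.1 subset_rfl⟩⟩

theorem exists_comp_eq_of_im_subset (hα : α ∈ POPI n Y) (hβ : β ∈ POPI n Y) (hdom : dom β ⊆ Y)
    (him : im α ⊆ im β) : ∃ γ ∈ POPI n Y, comp γ β = α :=
  ⟨comp α (inv β), comp_mem_POPI hα (inv_mem_POPI hβ hdom), comp_inv_comp hβ.1 him⟩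

theorem dom_subset_of_comp_eq_of_comp_eq (hα : Inj α) (hδ : δ ∈ POPI n Y) (hγβ : comp γ β = α)
    (hδα : comp δ α = β) : dom α ⊆ Y :=
  (dom_subset_im_of_comp_eq_self hα (by rw [comp_assoc, hδα, hγβ])).trans
    ((im_comp_subset γ δ).trans (im_subset_of_mem_POPI hδ))

end POPI

theorem green_L_general {n : ℕ} (Y : Finset (Fin n))
    (α β : PT n) (hα : α ∈ POPI n Y) (hβ : β ∈ POPI n Y) :
    LRel (POPI n Y) α β ↔
      (IsRegularIn (POPI n Y) α ∧ IsRegularIn (POPI n Y) β ∧ im α = im β) ∨ α = β := by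
  rw [isRegularIn_POPI_iff hα, isRegularIn_POPI_iff hβ]
  constructor
  · rintro ⟨hαβ, hβα⟩
    by_cases heq : α = β
    · exact Or.inr heq
    obtain ⟨γ, hγ, hγβ⟩ := hαβ.resolve_left heq
    obtain ⟨δ, hδ, hδα⟩ := hβα.resolve_left (Ne.symm heq)
    refine Or.inl ⟨dom_subset_of_comp_eq_of_comp_eq hα.1 hδ hγβ hδα,
      dom_subset_of_comp_eq_of_comp_eq hβ.1 hγ hδα hγβ, ?_⟩
    exact (hγβ ▸ im_comp_subset γ β).antisymm (hδα ▸ im_comp_subset δ α)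
  · rintro (⟨hdomα, hdomβ, him⟩ | rfl)
    · exact ⟨Or.inr (exists_comp_eq_of_im_subset hα hβ hdomβ him.subset),
        Or.inr (exists_comp_eq_of_im_subset hβ hα hdomα him.symm.subset)⟩
    · exact ⟨Or.inl rfl, Or.inl rfl⟩

/-- Green's ℒ on `POPI_n(Y)`. -/
theorem green_L {n : ℕ} (Y : Finset (Fin n)) (hY : Y.Nonempty)
    (α β : PT n) (hα : α ∈ POPI n Y) (hβ : β ∈ POPI n Y) :
    LRel (POPI n Y) α β ↔
      (IsRegularIn (POPI n Y) α ∧ IsRegularIn (POPI n Y) β ∧ im α = im β) ∨ α = β :=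
  green_L_general Y α β hα hβ

end POPIpaper
end

section
/- For nonempty subsets A ⊆ Ω_n and B ⊆ Y with |A| = |B| = k ≥ 1, the number of injective orientation-preserving partial transformations α of Ω_n with Dom(α) = A and Im(α) = B equals k. -/
open scoped Classical

namespace POPIpaper

/-! A partial map with domain `A`, `|A| = k`, amounts to a word `f : Fin k → Fin n`: `ofFin`
sends the `i`-th smallest element of `A` to `f i`, and its sequence of images read along `A`
is `List.ofFn f`. Being injective and orientation-preserving with image `B` then says that this
word has no repetitions, has letter set `B` and has a sorted rotation, i.e. that it is a rotation
of the increasing enumeration of `B`; that list has exactly `k` distinct rotations. -/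

theorem _root_.List.isRotated_sort_iff {α : Type*} [LinearOrder α] {l : List α} {s : Finset α} :
    l ~r s.sort (· ≤ ·) ↔
      l.Nodup ∧ l.toFinset = s ∧ ∃ j, (l.rotate j).Pairwise (· ≤ ·) := by
  constructor
  · intro h
    obtain ⟨j, hj⟩ := id h
    refine ⟨h.nodup_iff.2 (s.sort_nodup _), ?_, j, hj ▸ s.pairwise_sort _⟩
    ext a
    rw [List.mem_toFinset, h.mem_iff, Finset.mem_sort]
  · rintro ⟨hnd, hs, j, hj⟩
    have hperm : l.Perm (s.sort (· ≤ ·)) :=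
      List.perm_of_nodup_nodup_toFinset_eq hnd (s.sort_nodup _) (by rw [hs, Finset.sort_toFinset])
    exact ⟨j, ((l.rotate_perm j).trans hperm).eq_of_pairwise' hj (s.pairwise_sort _)⟩

theorem _root_.List.ncard_setOf_ofFn_isRotated {α : Type*} {k : ℕ} {l : List α} (hl : l.Nodup)
    (hlk : l.length = k) (hk : 1 ≤ k) :
    {f : Fin k → α | List.ofFn f ~r l}.ncard = k := by
  subst hlk
  have hrange : {l' : List α | l' ~r l} ⊆ Set.range (List.ofFn (n := l.length)) := by
    intro l' hl'
    have hlen : l'.length = l.length := hl'.perm.length_eq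
    exact ⟨fun i => l'[i.cast hlen.symm], List.ext_getElem (by simp [hlen]) (by simp)⟩
  have hcyc : {l' : List α | l' ~r l} = ↑l.cyclicPermutations.toFinset := by
    ext l'
    simp [List.mem_cyclicPermutations_iff]
  change (List.ofFn ⁻¹' {l' | l' ~r l}).ncard = _
  rw [Set.ncard_preimage_of_injective_subset_range List.ofFn_injective hrange, hcyc,
    Set.ncard_coe_finset, List.toFinset_card_of_nodup hl.cyclicPermutations,
    List.length_cyclicPermutations_of_ne_nil _ (List.ne_nil_of_length_pos hk)]

theorem _root_.Finset.sort_eq_filter_finRange {n : ℕ} (A : Finset (Fin n)) :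
    A.sort (· ≤ ·) = (List.finRange n).filter (· ∈ A) :=
  List.SortedLT.eq_of_mem_iff A.sortedLT_sort
    (List.sortedLT_iff_pairwise.2 ((List.sortedLT_iff_pairwise.1 (List.sortedLT_finRange n)).sublist
      List.filter_sublist))
    (by simp)

section OfFin

variable {n k : ℕ} {A : Finset (Fin n)}

noncomputable def ofFin (hA : A.card = k) (f : Fin k → Fin n) : PT n :=
  fun x => if h : x ∈ A then some (f ((A.orderIsoOfFin hA).symm ⟨x, h⟩)) else none

theorem ofFin_orderEmbOfFin (hA : A.card = k) (f : Fin k → Fin n) (i : Fin k) :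
    ofFin hA f (A.orderEmbOfFin hA i) = some (f i) := by
  have hmem := A.orderEmbOfFin_mem hA i
  rw [ofFin, dif_pos hmem]
  congr
  apply (A.orderIsoOfFin hA).injective
  ext
  simp

theorem ofFin_of_notMem (hA : A.card = k) (f : Fin k → Fin n) {x : Fin n} (hx : x ∉ A) :
    ofFin hA f x = none :=
  dif_neg hx

theorem dom_ofFin (hA : A.card = k) (f : Fin k → Fin n) : dom (ofFin hA f) = A := by
  ext x
  by_cases hx : x ∈ A <;> simp [dom, ofFin, hx]

theorem ofFin_injective (hA : A.card = k) : Function.Injective (ofFin hA) := by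
  intro f g h
  funext i
  simpa [ofFin_orderEmbOfFin] using congrFun h (A.orderEmbOfFin hA i)

theorem exists_ofFin_eq {α : PT n} (hA : A.card = k) (hα : dom α = A) :
    ∃ f, ofFin hA f = α := by
  have hdom : ∀ x, x ∈ A ↔ (α x).isSome := fun x => by simp [← hα, dom]
  have hsome : ∀ i, (α (A.orderEmbOfFin hA i)).isSome := fun i =>
    (hdom _).1 (A.orderEmbOfFin_mem hA i)
  refine ⟨fun i => (α (A.orderEmbOfFin hA i)).get (hsome i), funext fun x => ?_⟩
  by_cases hx : x ∈ A
  · obtain ⟨i, rfl⟩ : x ∈ Set.range (A.orderEmbOfFin hA) := by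
      rwa [A.range_orderEmbOfFin hA]
    simp [ofFin_orderEmbOfFin]
  · rw [ofFin_of_notMem hA _ hx, eq_comm, ← Option.not_isSome_iff_eq_none]
    exact fun h => hx ((hdom x).2 h)

theorem filterMap_ofFin (hA : A.card = k) (f : Fin k → Fin n) :
    (List.finRange n).filterMap (ofFin hA f) = List.ofFn f := by
  calc (List.finRange n).filterMap (ofFin hA f)
      = ((List.finRange n).filter (· ∈ A)).filterMap (ofFin hA f) := by
        rw [List.filterMap_filter]
        refine List.filterMap_congr fun x _ => ?_
        by_cases hx : x ∈ A <;> simp [hx, ofFin_of_notMem]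
    _ = ((List.finRange k).map (A.orderEmbOfFin hA)).filterMap (ofFin hA f) := by
        rw [A.listMap_orderEmbOfFin_finRange, A.sort_eq_filter_finRange]
    _ = List.ofFn f := by
        rw [List.filterMap_map, List.ofFn_eq_map, ← List.filterMap_eq_map]
        exact List.filterMap_congr fun i _ => ofFin_orderEmbOfFin hA f i

theorem inj_ofFin_iff (hA : A.card = k) (f : Fin k → Fin n) :
    Inj (ofFin hA f) ↔ Function.Injective f := by
  refine ⟨fun h i j hij => ?_, fun h x y z hx hy => ?_⟩
  · exact (A.orderEmbOfFin hA).injective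
      (h _ _ _ (ofFin_orderEmbOfFin hA f i) (hij ▸ ofFin_orderEmbOfFin hA f j))
  · have hmem : ∀ {x z}, ofFin hA f x = some z → x ∈ A := fun {x z} hxz => by
      by_contra hx
      simp [ofFin_of_notMem hA f hx] at hxz
    rw [ofFin, dif_pos (hmem hx)] at hx
    rw [ofFin, dif_pos (hmem hy)] at hy
    have hxy := (A.orderIsoOfFin hA).symm.injective (h (Option.some_injective _ (hx.trans hy.symm)))
    simpa using congrArg Subtype.val hxy

theorem im_ofFin (hA : A.card = k) (f : Fin k → Fin n) :
    im (ofFin hA f) = (List.ofFn f).toFinset := by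
  ext y
  simp only [im, Finset.mem_filter, Finset.mem_univ, true_and, List.mem_toFinset,
    ← filterMap_ofFin hA f, List.mem_filterMap, List.mem_finRange]

theorem op_ofFin_iff (hA : A.card = k) (f : Fin k → Fin n) :
    OP (ofFin hA f) ↔ ∃ j, ((List.ofFn f).rotate j).Pairwise (· ≤ ·) := by
  rw [OP, filterMap_ofFin]

theorem setOf_dom_im_eq_image_ofFin (hA : A.card = k) (B : Finset (Fin n)) :
    {α : PT n | Inj α ∧ OP α ∧ dom α = A ∧ im α = B}
      = ofFin hA '' {f | List.ofFn f ~r B.sort (· ≤ ·)} := by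
  ext α
  constructor
  · rintro ⟨hinj, hop, hdom, him⟩
    obtain ⟨f, rfl⟩ := exists_ofFin_eq hA hdom
    rw [inj_ofFin_iff, ← List.nodup_ofFn] at hinj
    refine ⟨f, List.isRotated_sort_iff.2 ⟨hinj, im_ofFin hA f ▸ him, ?_⟩, rfl⟩
    exact (op_ofFin_iff hA f).1 hop
  · rintro ⟨f, hf, rfl⟩
    obtain ⟨hnd, him, hop⟩ := List.isRotated_sort_iff.1 hf
    exact ⟨(inj_ofFin_iff hA f).2 (List.nodup_ofFn.1 hnd), (op_ofFin_iff hA f).2 hop,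
      dom_ofFin hA f, im_ofFin hA f ▸ him⟩

end OfFin

theorem card_fixed_dom_im_general {n k : ℕ} (A B : Finset (Fin n))
    (hAk : A.card = k) (hBk : B.card = k) (hk : 1 ≤ k) :
    Set.ncard {α : PT n | Inj α ∧ OP α ∧ dom α = A ∧ im α = B} = k := by
  rw [setOf_dom_im_eq_image_ofFin hAk, (ofFin_injective hAk).injOn.ncard_image]
  exact List.ncard_setOf_ofFn_isRotated (B.sort_nodup _) (by rw [Finset.length_sort, hBk]) hk

/-- the number of injective orientation-preserving partial maps with
given domain `A` and image `B ⊆ Y`, `|A| = |B| = k ≥ 1`, is exactly `k`. -/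
theorem card_fixed_dom_im {n k : ℕ} (Y A B : Finset (Fin n)) (hA : A.Nonempty)
    (hBY : B ⊆ Y) (hAk : A.card = k) (hBk : B.card = k) (hk : 1 ≤ k) :
    Set.ncard {α : PT n | Inj α ∧ OP α ∧ dom α = A ∧ im α = B} = k :=
  card_fixed_dom_im_general A B hAk hBk hk

end POPIpaper
end

section
/- For 1 ≤ r ≤ n, the combinatorial identity ∑_{k=1}^{r} k·C(r,k)·C(n,k) = r·C(n+r−1, r) holds, where C denotes the binomial coefficient. -/
/-!
Absorption, `k * C(r, k) = r * C(r - 1, k - 1)`, pulls the factor `r` out of every term; what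
remains, `∑ C(r - 1, k - 1) * C(n, k) = ∑ C(r - 1, r - k) * C(n, k)`, is Vandermonde's
convolution for `C(n + r - 1, r)`.
-/

open scoped Classical

open Finset

theorem Finset.sum_Icc_one_eq_sum_range {M : Type*} [AddCommMonoid M] (f : ℕ → M) (r : ℕ) :
    ∑ k ∈ Icc 1 r, f k = ∑ k ∈ range r, f (k + 1) := by
  rw [range_eq_Ico, sum_Ico_add', zero_add, Ico_add_one_right_eq_Icc]

theorem Nat.sum_range_choose_mul_choose_succ (m n : ℕ) :
    ∑ k ∈ range (m + 1), m.choose k * n.choose (k + 1) = (m + n).choose (m + 1) := by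
  rw [Nat.add_choose_eq, Nat.sum_antidiagonal_succ', Nat.choose_succ_self, zero_mul, zero_add,
    ← Nat.sum_antidiagonal_swap, Nat.sum_antidiagonal_eq_sum_range_succ_mk]
  refine sum_congr rfl fun k hk => ?_
  rw [Prod.swap_prod_mk, Nat.choose_symm (Nat.lt_succ_iff.mp (mem_range.mp hk))]

namespace POPIpaper

theorem sum_choose_identity_general (n r : ℕ) :
    ∑ k ∈ Finset.Icc 1 r, k * r.choose k * n.choose k
      = r * (n + r - 1).choose r := by
  rcases r with _ | m
  · simp
  calc ∑ k ∈ Icc 1 (m + 1), k * (m + 1).choose k * n.choose k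
      = ∑ k ∈ range (m + 1), (m + 1) * (m.choose k * n.choose (k + 1)) := by
        rw [sum_Icc_one_eq_sum_range]
        refine sum_congr rfl fun k _ => ?_
        rw [← mul_assoc, Nat.add_one_mul_choose_eq, mul_comm (k + 1)]
    _ = (m + 1) * (n + (m + 1) - 1).choose (m + 1) := by
        rw [← mul_sum, Nat.sum_range_choose_mul_choose_succ, Nat.add_succ_sub_one, add_comm n]

/-- `∑_{k=1}^{r} k·C(r,k)·C(n,k) = r·C(n+r-1, r)`. -/
theorem sum_choose_identity (n r : ℕ) (h1 : 1 ≤ r) (h2 : r ≤ n) :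
    ∑ k ∈ Finset.Icc 1 r, k * r.choose k * n.choose k
      = r * (n + r - 1).choose r :=
  sum_choose_identity_general n r

end POPIpaper
end

section
/- Let Φ : POPI_n(Y) → POPI_n(Z) be a semigroup isomorphism, where Y, Z are nonempty subsets of Ω_n. Then there exists a bijection φ : Y → Z such that for each y ∈ Y, Φ maps the partial identity on {y} to the partial identity on {yφ}. In particular |Y| = |Z|. -/
/-! The idempotents of `POPI_n(Y)` are exactly the partial identities `id_A` with `A ⊆ Y`, so
`Φ` maps each `id_{y}` to some `id_B` with `B ⊆ Z`, and `B ≠ ∅` because `Φ` fixes the zero.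
For `z ∈ B`, a preimage `γ` of `id_{z}` satisfies
`(id_{y} γ id_{y})Φ = id_B id_{z} id_B = id_{z} ≠ 0`, so `γ` fixes `y`, whence
`id_{y} γ id_{y} = id_{y}` and `B = {z}`. Conversely, for `z ∈ Z` a preimage `γ` of `id_{z}`
sends some point to a `w ∈ Y`; then `γ id_{w} ≠ 0` and its image `id_{z} id_{wφ}` is nonzero,
so `wφ = z`.

Only products `α id_A` occur, and these stay in `POPI_n(Y)`: cutting down the image of a map
only deletes entries from its sequence of images, and a subsequence of a cyclic sequence is
cyclic. -/

open scoped Classical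

namespace POPIpaper

theorem _root_.List.exists_rotate_pairwise_of_sublist {α : Type*} {R : α → α → Prop}
    {l₁ l₂ : List α} (h : l₁.Sublist l₂) (h₂ : ∃ k, (l₂.rotate k).Pairwise R) :
    ∃ k, (l₁.rotate k).Pairwise R := by
  obtain ⟨k, hk⟩ := h₂
  rcases eq_or_ne l₂ [] with rfl | hne
  · exact ⟨0, by simp [List.sublist_nil.mp h]⟩
  -- Split `l₂` at the rotation point: `l₁` splits accordingly, and rotating `l₁` by the
  -- length of its first part gives a sublist of the sorted rotation of `l₂`.
  set m := k % l₂.length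
  have hm : m ≤ l₂.length := (Nat.mod_lt _ (List.length_pos_iff.mpr hne)).le
  have hsorted : (l₂.drop m ++ l₂.take m).Pairwise R := by
    rwa [← List.rotate_eq_drop_append_take hm, List.rotate_mod]
  rw [← List.take_append_drop m l₂] at h
  obtain ⟨a, b, rfl, ha, hb⟩ := List.sublist_append_iff.mp h
  refine ⟨a.length, ?_⟩
  rw [List.rotate_eq_drop_append_take (by simp), List.drop_left, List.take_left]
  exact hsorted.sublist (hb.append ha)

variable {n : ℕ}

theorem idp_eq_guard (A : Finset (Fin n)) : idp A = Option.guard (fun x => decide (x ∈ A)) := by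
  funext x
  simp [idp, Option.guard]

theorem idp_injective : Function.Injective (idp (n := n)) := by
  intro A B h
  ext x
  have := congrFun h x
  by_cases hA : x ∈ A <;> by_cases hB : x ∈ B <;> simp_all [idp]

theorem comp_idp_idp (A B : Finset (Fin n)) : comp (idp A) (idp B) = idp (A ∩ B) := by
  funext x
  by_cases hA : x ∈ A <;> by_cases hB : x ∈ B <;> simp [comp, idp, hA, hB]

theorem idp_singleton_ne_idp_empty (y : Fin n) : idp {y} ≠ idp ∅ :=
  idp_injective.ne (Finset.singleton_ne_empty y)

theorem idp_empty_comp (α : PT n) : comp (idp ∅) α = idp ∅ := by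
  funext x
  simp [comp, idp]

theorem comp_idp_empty (α : PT n) : comp α (idp ∅) = idp ∅ := by
  funext x
  cases α x <;> simp [comp, idp]

theorem idp_singleton_comp_comp_idp_singleton (y : Fin n) (γ : PT n) :
    comp (idp {y}) (comp γ (idp {y})) = idp ({y} ∩ fix γ) := by
  funext x
  by_cases hx : x = y
  · subst hx
    cases h : γ x with
    | none => simp [comp, idp, fix, h]
    | some w => by_cases hw : w = x <;> simp [comp, idp, fix, h, hw]
  · simp [comp, idp, hx]

theorem eq_idp_dom_of_comp_self {α : PT n} (hα : Inj α) (h : comp α α = α) :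
    α = idp (dom α) := by
  funext x
  cases hx : α x with
  | none => simp [idp, dom, hx]
  | some y =>
    have hy : α y = some y := by simpa [comp, hx] using congrFun h x
    obtain rfl : x = y := hα x y y hx hy
    simp [idp, dom, hx]

theorem idp_mem_POPI {Y A : Finset (Fin n)} (h : A ⊆ Y) : idp A ∈ POPI n Y := by
  refine ⟨?_, ⟨0, ?_⟩, ?_⟩
  · intro x y z hx hy
    simp only [idp] at hx hy
    split_ifs at hx hy
    simp_all
  · rw [List.rotate_zero, idp_eq_guard, List.filterMap_eq_filter]
    exact ((List.pairwise_lt_finRange n).imp le_of_lt).sublist List.filter_sublist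
  · intro x y hxy
    simp only [idp] at hxy
    split_ifs at hxy with hx
    exact Option.some.inj hxy ▸ h hx

theorem idp_singleton_mem_POPI {Y : Finset (Fin n)} {y : Fin n} (hy : y ∈ Y) :
    idp {y} ∈ POPI n Y :=
  idp_mem_POPI (Finset.singleton_subset_iff.mpr hy)

theorem comp_idp_mem_POPI {Y : Finset (Fin n)} {α : PT n} (hα : α ∈ POPI n Y)
    (A : Finset (Fin n)) : comp α (idp A) ∈ POPI n Y := by
  obtain ⟨hinj, hop, him⟩ := hα
  have hsome {x z : Fin n} (h : comp α (idp A) x = some z) : α x = some z := by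
    cases hx : α x <;> simp_all [comp, idp]
  refine ⟨fun x y z hx hy => hinj x y z (hsome hx) (hsome hy), ?_,
    fun x y hxy => him x y (hsome hxy)⟩
  refine List.exists_rotate_pairwise_of_sublist ?_ hop
  unfold comp
  rw [← List.filterMap_filterMap, idp_eq_guard, List.filterMap_eq_filter]
  exact List.filter_sublist

theorem IsIso.map_idp_empty {S T : Set (PT n)} {Φ : PT n → PT n} (hΦ : IsIso S T Φ)
    (h0S : idp ∅ ∈ S) (h0T : idp ∅ ∈ T) : Φ (idp ∅) = idp ∅ := by
  obtain ⟨γ, hγ, hΦγ⟩ := hΦ.1.surjOn h0T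
  calc Φ (idp ∅) = Φ (comp (idp ∅) γ) := by rw [idp_empty_comp]
    _ = comp (Φ (idp ∅)) (idp ∅) := by rw [hΦ.2 _ h0S _ hγ, hΦγ]
    _ = idp ∅ := comp_idp_empty _

section Iso

variable {Y Z : Finset (Fin n)} {Φ : PT n → PT n} (hΦ : IsIso (POPI n Y) (POPI n Z) Φ)
include hΦ

theorem IsIso.map_eq_idp_empty_iff {α : PT n} (hα : α ∈ POPI n Y) :
    Φ α = idp ∅ ↔ α = idp ∅ := by
  have h0Y := idp_mem_POPI (Finset.empty_subset Y)
  have h0 := hΦ.map_idp_empty h0Y (idp_mem_POPI (Finset.empty_subset Z))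
  exact ⟨fun h => hΦ.1.injOn hα h0Y (h.trans h0.symm), fun h => h ▸ h0⟩

theorem IsIso.exists_map_idp_eq_idp {A : Finset (Fin n)} (hA : A ⊆ Y) :
    ∃ B ⊆ Z, Φ (idp A) = idp B := by
  have hAY := idp_mem_POPI hA
  obtain ⟨hinj, -, him⟩ := hΦ.1.mapsTo hAY
  have hidem : comp (Φ (idp A)) (Φ (idp A)) = Φ (idp A) := by
    rw [← hΦ.2 _ hAY _ hAY, comp_idp_idp, Finset.inter_self]
  have hdom := eq_idp_dom_of_comp_self hinj hidem
  refine ⟨dom (Φ (idp A)), fun z hz => him z z ?_, hdom⟩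
  rw [hdom]
  simp [idp, hz]

theorem IsIso.map_idp_singleton_eq {y z : Fin n} (hy : y ∈ Y) (hz : z ∈ Z) {B : Finset (Fin n)}
    (hB : Φ (idp {y}) = idp B) (hzB : z ∈ B) : Φ (idp {y}) = idp {z} := by
  have hyY := idp_singleton_mem_POPI hy
  obtain ⟨γ, hγ, hΦγ⟩ := hΦ.1.surjOn (idp_singleton_mem_POPI hz)
  have hγy := comp_idp_mem_POPI hγ {y}
  have hsandwich := idp_singleton_comp_comp_idp_singleton y γ
  have hΦsandwich : Φ (comp (idp {y}) (comp γ (idp {y}))) = idp {z} := by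
    rw [hΦ.2 _ hyY _ hγy, hΦ.2 _ hγ _ hyY, hB, hΦγ, comp_idp_idp, comp_idp_idp,
      Finset.singleton_inter_of_mem hzB, Finset.inter_singleton_of_mem hzB]
  have hfix : y ∈ fix γ := by
    by_contra hy'
    rw [hsandwich, Finset.singleton_inter_of_notMem hy',
      (hΦ.map_eq_idp_empty_iff (idp_mem_POPI (Finset.empty_subset Y))).mpr rfl] at hΦsandwich
    exact idp_singleton_ne_idp_empty z hΦsandwich.symm
  rwa [hsandwich, Finset.singleton_inter_of_mem hfix] at hΦsandwich

theorem IsIso.exists_map_idp_singleton {y : Fin n} (hy : y ∈ Y) :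
    ∃ z ∈ Z, Φ (idp {y}) = idp {z} := by
  obtain ⟨B, hBZ, hB⟩ := hΦ.exists_map_idp_eq_idp (Finset.singleton_subset_iff.mpr hy)
  obtain ⟨z, hz⟩ : B.Nonempty := by
    rw [Finset.nonempty_iff_ne_empty]
    rintro rfl
    exact idp_singleton_ne_idp_empty y
      ((hΦ.map_eq_idp_empty_iff (idp_singleton_mem_POPI hy)).mp hB)
  exact ⟨z, hBZ hz, hΦ.map_idp_singleton_eq hy (hBZ hz) hB hz⟩

theorem IsIso.exists_preimage_idp_singleton {z : Fin n} (hz : z ∈ Z) :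
    ∃ y ∈ Y, Φ (idp {y}) = idp {z} := by
  obtain ⟨γ, hγ, hΦγ⟩ := hΦ.1.surjOn (idp_singleton_mem_POPI hz)
  obtain ⟨x, w, hxw⟩ : ∃ x w, γ x = some w := by
    by_contra! h
    have : γ = idp ∅ := funext fun x => by
      simpa [idp, Option.eq_none_iff_forall_ne_some] using h x
    rw [(hΦ.map_eq_idp_empty_iff hγ).mpr this] at hΦγ
    exact idp_singleton_ne_idp_empty z hΦγ.symm
  have hw : w ∈ Y := hγ.2.2 x w hxw
  have hwY := idp_singleton_mem_POPI hw
  obtain ⟨z', -, hz'⟩ := hΦ.exists_map_idp_singleton hw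
  have hne : comp γ (idp {w}) ≠ idp ∅ := fun h => by
    simpa [comp, idp, hxw] using congrFun h x
  have hΦne : idp ({z} ∩ {z'}) ≠ idp ∅ := by
    rwa [← comp_idp_idp, ← hΦγ, ← hz', ← hΦ.2 _ hγ _ hwY, Ne,
      hΦ.map_eq_idp_empty_iff (comp_idp_mem_POPI hγ {w})]
  obtain rfl : z' = z := by
    by_contra h
    exact hΦne (by rw [Finset.singleton_inter_of_notMem (Finset.notMem_singleton.mpr (Ne.symm h))])
  exact ⟨w, hw, hz'⟩

end Iso

theorem iso_induces_bijection_general {n : ℕ} (Y Z : Finset (Fin n))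
    (Φ : PT n → PT n)
    (hΦ : IsIso (POPI n Y) (POPI n Z) Φ) :
    ∃ φ : Fin n → Fin n, Set.BijOn φ ↑Y ↑Z ∧
      (∀ y ∈ Y, Φ (idp {y}) = idp {φ y}) ∧ Y.card = Z.card := by
  choose! φ hφZ hφ using fun y (hy : y ∈ Y) => hΦ.exists_map_idp_singleton hy
  have hmaps : Set.MapsTo φ Y Z := hφZ
  have hinj : Set.InjOn φ Y := fun a ha b hb hab => by
    have := hΦ.1.injOn (idp_singleton_mem_POPI ha)
      (idp_singleton_mem_POPI hb) (by rw [hφ a ha, hφ b hb, hab])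
    exact Finset.singleton_injective (idp_injective this)
  have hsurj : Set.SurjOn φ Y Z := fun z hz => by
    obtain ⟨y, hy, hyz⟩ := hΦ.exists_preimage_idp_singleton hz
    exact ⟨y, hy, Finset.singleton_injective (idp_injective ((hφ y hy).symm.trans hyz))⟩
  exact ⟨φ, ⟨hmaps, hinj, hsurj⟩, hφ, Finset.card_nbij φ hmaps hinj hsurj⟩

/-- an isomorphism `Φ : POPI_n(Y) → POPI_n(Z)` induces a bijection
`φ : Y → Z` with `id_{y}Φ = id_{yφ}`; in particular `|Y| = |Z|`. -/
theorem iso_induces_bijection {n : ℕ} (Y Z : Finset (Fin n))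
    (hY : Y.Nonempty) (hZ : Z.Nonempty) (Φ : PT n → PT n)
    (hΦ : IsIso (POPI n Y) (POPI n Z) Φ) :
    ∃ φ : Fin n → Fin n, Set.BijOn φ ↑Y ↑Z ∧
      (∀ y ∈ Y, Φ (idp {y}) = idp {φ y}) ∧ Y.card = Z.card :=
  iso_induces_bijection_general Y Z Φ hΦ

end POPIpaper
end

section
/- An injective partial transformation α of Ω_n = {1,...,n} is a restriction of a permutation in the dihedral group D_{2n} = ⟨g, h⟩ (where g is the n-cycle i ↦ i+1 mod n and h is the reversal i ↦ n+1−i) if and only if for all i, j ∈ Dom(α) with i < j, one has |jα − iα| ∈ {j − i, n − (j − i)}. -/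
open scoped Classical

namespace POPIpaper

/-- The dihedral group `D_{2n}`, as the subgroup of the symmetric group on `Fin n`
generated by the `n`-cycle `i ↦ i+1 (mod n)` and the reversal `i ↦ n+1-i`. -/
def D2 (n : ℕ) : Subgroup (Equiv.Perm (Fin n)) :=
  Subgroup.closure {finRotate n, Fin.revPerm}

/-! Identify `Fin n` with `ZMod n`. The generators act as `x ↦ x + 1` and `x ↦ -x - 1`, so every
element of `D_{2n}` is a map `x ↦ ±x + c`, and each such map lies in `D_{2n}`. For `i < j`, the
condition `|jα - iα| ∈ {j - i, n - (j - i)}` says exactly that `jα - iα ≡ ±(j - i) (mod n)`.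
Such pairwise congruences glue to one global map `x ↦ ±x + c`: if neither sign works relative to a
base point, some point `a` is forced onto the `-` map and some `b` onto the `+` map, and the pair
`a, b` is then consistent with neither sign. -/

open Equiv

theorem Int.eq_zero_or_eq_of_dvd_of_lt {n x : ℤ} (h : n ∣ x) (hlo : -n < x) (hhi : x < 2 * n) :
    x = 0 ∨ x = n := by
  obtain ⟨k, rfl⟩ := h
  have hn : 0 < n := by linarith
  have hk₀ : -1 < k := by nlinarith
  have hk₁ : k < 2 := by nlinarith
  interval_cases k <;> simp

theorem Int.exists_units_modEq_mul_iff {n a d : ℤ} (ha : |a| < n) (hd : 0 ≤ d) (hdn : d ≤ n) :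
    (∃ ε : ℤˣ, a ≡ ε * d [ZMOD n]) ↔ |a| = d ∨ |a| = n - d := by
  rw [abs_lt] at ha
  have hnd : 0 ≤ n - d := by linarith
  constructor
  · rintro ⟨ε, hε⟩
    rcases Int.units_eq_one_or ε with rfl | rfl
    · rcases Int.eq_zero_or_eq_of_dvd_of_lt (Int.ModEq.dvd hε) (by push_cast; linarith)
        (by push_cast; linarith) with h | h
      · exact Or.inl ((abs_eq hd).2 (Or.inl (by push_cast at h; linarith)))
      · exact Or.inr ((abs_eq hnd).2 (Or.inr (by push_cast at h; linarith)))
    · rcases Int.eq_zero_or_eq_of_dvd_of_lt (dvd_neg.2 (Int.ModEq.dvd hε))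
        (by push_cast; linarith) (by push_cast; linarith) with h | h
      · exact Or.inl ((abs_eq hd).2 (Or.inr (by push_cast at h; linarith)))
      · exact Or.inr ((abs_eq hnd).2 (Or.inl (by push_cast at h; linarith)))
  · rintro (h | h)
    · rcases (abs_eq hd).1 h with rfl | rfl
      · exact ⟨1, by simp [Int.ModEq.refl]⟩
      · exact ⟨-1, by simp [Int.ModEq.refl]⟩
    · rcases (abs_eq hnd).1 h with rfl | rfl
      · exact ⟨-1, (Int.modEq_iff_dvd).2 ⟨-1, by push_cast; ring⟩⟩
      · exact ⟨1, (Int.modEq_iff_dvd).2 ⟨1, by push_cast; ring⟩⟩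

theorem exists_units_smul_add_of_forall_sub {ι G : Type*} [AddCommGroup G] (u v : ι → G)
    (h : ∀ i j, ∃ ε : ℤˣ, v j - v i = ε • (u j - u i)) :
    ∃ ε : ℤˣ, ∃ c : G, ∀ i, v i = ε • u i + c := by
  rcases isEmpty_or_nonempty ι with hι | ⟨⟨i₀⟩⟩
  · exact ⟨1, 0, hι.elim⟩
  have hsign : ∀ i, v i = u i + (v i₀ - u i₀) ∨ v i = -u i + (v i₀ + u i₀) := fun i => by
    obtain ⟨ε, hε⟩ := h i₀ i
    rcases Int.units_eq_one_or ε with rfl | rfl <;> simp only [one_smul, Units.neg_smul] at hε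
    · left; linear_combination (norm := module) hε
    · right; linear_combination (norm := module) hε
  by_contra! hne
  obtain ⟨a, ha⟩ := hne 1 (v i₀ - u i₀)
  obtain ⟨b, hb⟩ := hne (-1) (v i₀ + u i₀)
  rw [one_smul] at ha
  rw [Units.neg_smul, one_smul] at hb
  have ha' := (hsign a).resolve_left ha
  have hb' := (hsign b).resolve_right hb
  obtain ⟨ε, hε⟩ := h a b
  rcases Int.units_eq_one_or ε with rfl | rfl <;> simp only [one_smul, Units.neg_smul] at hε
  · exact ha (by linear_combination (norm := module) hb' - hε)
  · exact hb (by linear_combination (norm := module) ha' + hε)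

section Dihedral

variable {n : ℕ}

theorem natCast_fin_injective : Function.Injective (fun x : Fin n => (x : ZMod n)) := by
  intro x y h
  have := (ZMod.natCast_eq_natCast_iff' _ _ _).1 h
  exact Fin.ext (by rwa [Nat.mod_eq_of_lt x.isLt, Nat.mod_eq_of_lt y.isLt] at this)

theorem natCast_finRotate (x : Fin n) : ((finRotate n x : ℕ) : ZMod n) = x + 1 := by
  have := NeZero.of_pos x.pos
  rw [finRotate_apply, Fin.val_add, Fin.val_one', ZMod.natCast_mod, Nat.cast_add, ZMod.natCast_mod,
    Nat.cast_one]

theorem natCast_revPerm (x : Fin n) : ((Fin.revPerm x : ℕ) : ZMod n) = -x - 1 := by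
  rw [Fin.revPerm_apply, Fin.val_rev, Nat.cast_sub (by omega), ZMod.natCast_self]
  push_cast
  ring

theorem natCast_finRotate_pow (k : ℕ) (x : Fin n) :
    (((finRotate n ^ k) x : ℕ) : ZMod n) = x + k := by
  induction k with
  | zero => simp
  | succ k ih =>
    rw [pow_succ', Perm.mul_apply, natCast_finRotate, ih]
    push_cast
    ring

theorem exists_units_smul_add_of_mem_D2 {δ : Perm (Fin n)} (hδ : δ ∈ D2 n) :
    ∃ ε : ℤˣ, ∃ c : ZMod n, ∀ x, (δ x : ZMod n) = ε • (x : ZMod n) + c := by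
  induction hδ using Subgroup.closure_induction with
  | mem g hg =>
    rcases hg with rfl | rfl
    · exact ⟨1, 1, fun x => by rw [natCast_finRotate, one_smul]⟩
    · exact ⟨-1, -1, fun x => by rw [natCast_revPerm, Units.neg_smul, one_smul, sub_eq_add_neg]⟩
  | one => exact ⟨1, 0, fun x => by simp⟩
  | mul δ₁ δ₂ _ _ ih₁ ih₂ =>
    obtain ⟨ε₁, c₁, h₁⟩ := ih₁
    obtain ⟨ε₂, c₂, h₂⟩ := ih₂
    exact ⟨ε₁ * ε₂, ε₁ • c₂ + c₁, fun x => by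
      rw [Perm.mul_apply, h₁, h₂, smul_add, mul_smul, add_assoc]⟩
  | inv δ _ ih =>
    obtain ⟨ε, c, hδ⟩ := ih
    refine ⟨ε⁻¹, -(ε⁻¹ • c), fun x => ?_⟩
    have hx := hδ (δ⁻¹ x)
    rw [← Perm.mul_apply, mul_inv_cancel, Perm.one_apply] at hx
    rw [hx, smul_add, inv_smul_smul, add_neg_cancel_right]

theorem exists_mem_D2_units_smul_add (ε : ℤˣ) (c : ZMod n) :
    ∃ δ ∈ D2 n, ∀ x, (δ x : ZMod n) = ε • (x : ZMod n) + c := by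
  have hrot : finRotate n ∈ D2 n := Subgroup.subset_closure (Set.mem_insert _ _)
  have hrev : Fin.revPerm ∈ D2 n := Subgroup.subset_closure (Set.mem_insert_of_mem _ rfl)
  rcases Int.units_eq_one_or ε with rfl | rfl
  · refine ⟨finRotate n ^ c.val, pow_mem hrot _, fun x => ?_⟩
    have := NeZero.of_pos x.pos
    rw [natCast_finRotate_pow, ZMod.natCast_zmod_val, one_smul]
  · refine ⟨finRotate n ^ (c + 1).val * Fin.revPerm, mul_mem (pow_mem hrot _) hrev, fun x => ?_⟩
    have := NeZero.of_pos x.pos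
    rw [Perm.mul_apply, natCast_finRotate_pow, natCast_revPerm, ZMod.natCast_zmod_val,
      Units.neg_smul, one_smul]
    ring

theorem exists_units_smul_sub_iff {i j zi zj : Fin n} (hij : i ≤ j) :
    (∃ ε : ℤˣ, (zj : ZMod n) - zi = ε • ((j : ZMod n) - i)) ↔
      (|(zj : ℤ) - zi| = (j : ℤ) - i ∨ |(zj : ℤ) - zi| = n - ((j : ℤ) - i)) := by
  rw [← Int.exists_units_modEq_mul_iff (by rw [abs_lt]; omega) (by omega) (by omega)]
  refine exists_congr fun ε => ?_
  rw [← ZMod.intCast_eq_intCast_iff, Units.smul_def, zsmul_eq_mul]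
  push_cast
  rfl

end Dihedral

theorem exists_units_smul_sub_of_forall_lt {n : ℕ} {α : PT n}
    (h : ∀ i j zi zj : Fin n, α i = some zi → α j = some zj → i < j →
      (|(zj : ℤ) - zi| = (j : ℤ) - i ∨ |(zj : ℤ) - zi| = n - ((j : ℤ) - i)))
    {i j zi zj : Fin n} (hi : α i = some zi) (hj : α j = some zj) :
    ∃ ε : ℤˣ, (zj : ZMod n) - zi = ε • ((j : ZMod n) - i) := by
  rcases lt_trichotomy i j with hij | rfl | hji
  · exact (exists_units_smul_sub_iff hij.le).2 (h i j zi zj hi hj hij)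
  · obtain rfl : zi = zj := Option.some_injective _ (hi.symm.trans hj)
    exact ⟨1, by simp⟩
  · obtain ⟨ε, hε⟩ := (exists_units_smul_sub_iff hji.le).2 (h j i zj zi hj hi hji)
    exact ⟨ε, by rw [← neg_sub, hε, ← smul_neg, neg_sub]⟩

theorem restriction_of_dihedral_iff_general {n : ℕ} (α : PT n) :
    (∃ δ ∈ D2 n, ∀ x z : Fin n, α x = some z → δ x = z) ↔
      (∀ i j zi zj : Fin n, α i = some zi → α j = some zj → i < j →
        (|(zj : ℤ) - (zi : ℤ)| = (j : ℤ) - (i : ℤ) ∨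
         |(zj : ℤ) - (zi : ℤ)| = (n : ℤ) - ((j : ℤ) - (i : ℤ)))) := by
  constructor
  · rintro ⟨δ, hδ, hres⟩ i j zi zj hi hj hij
    obtain ⟨ε, c, hδc⟩ := exists_units_smul_add_of_mem_D2 hδ
    refine (exists_units_smul_sub_iff hij.le).1 ⟨ε, ?_⟩
    rw [← hres i zi hi, ← hres j zj hj, hδc, hδc, smul_sub]
    abel
  · intro h
    obtain ⟨ε, c, hgraph⟩ := exists_units_smul_add_of_forall_sub
      (fun p : {p : Fin n × Fin n // α p.1 = some p.2} => (p.1.1 : ZMod n))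
      (fun p => (p.1.2 : ZMod n)) fun p q => exists_units_smul_sub_of_forall_lt h p.2 q.2
    obtain ⟨δ, hδ, hδc⟩ := exists_mem_D2_units_smul_add ε c
    exact ⟨δ, hδ, fun x z hxz =>
      natCast_fin_injective ((hδc x).trans (hgraph ⟨(x, z), hxz⟩).symm)⟩

/-- an injective partial transformation is a restriction of a
permutation in `D_{2n}` iff `|jα - iα| ∈ {j-i, n-(j-i)}` for all `i < j` in its domain. -/
theorem restriction_of_dihedral_iff {n : ℕ} (hn : 3 ≤ n) (α : PT n) (hinj : Inj α) :
    (∃ δ ∈ D2 n, ∀ x z : Fin n, α x = some z → δ x = z) ↔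
      (∀ i j zi zj : Fin n, α i = some zi → α j = some zj → i < j →
        (|(zj : ℤ) - (zi : ℤ)| = (j : ℤ) - (i : ℤ) ∨
         |(zj : ℤ) - (zi : ℤ)| = (n : ℤ) - ((j : ℤ) - (i : ℤ)))) :=
  restriction_of_dihedral_iff_general α

end POPIpaper
end
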